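/- arXiv:2112.11228 — 4 statements merged into one kernel-verified Lean document; each statement's English description precedes it below -/
import Mathlib

section
/- The Euler–Mascheroni constant satisfies γ = log(4π) − 2 + 2^4 · Σ_{n=1}^∞ n·a_{2n}/2^{2n}, i.e. γ = log(4π) − 2 + 16·Σ_{n=1}^∞ n·a_{2n}/4^n. -/
/-- The Riemann xi function: `ξ(s) = (1/2)·s·(s−1)·π^{−s/2}·Γ(s/2)·ζ(s)`. -/
noncomputable def riemannXi (s : ℂ) : ℂ := (1 / 2) * s * (s - 1) * completedRiemannZeta s

/-- The `2n`-th Taylor coefficient of `ξ` at `s = 1/2`, a real number. -/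
noncomputable def a (n : ℕ) : ℝ :=
  (iteratedDeriv (2 * n) riemannXi (1 / 2)).re / (2 * n).factorial

/-!
The function `ξ` extends to an entire function invariant under `s ↦ 1 - s`, so its Taylor
series at `1/2` is even: `ξ(1/2 + w) = ∑ a_{2n} w^{2n}`. Differentiating and putting `w = 1/2`
gives `ξ'(1) = ∑ 2n a_{2n} 2^{1-2n} = 4 ∑ n a_{2n} / 4^n`. On the other hand
`ξ'(1) = Λ₀(1) / 2 = (γ - log 4π) / 4 + 1/2`, by the value of the entire completed zeta
function `Λ₀` at `1`, which comes from the Laurent expansion `ζ(s) = 1/(s - 1) + γ + O(s - 1)`.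
-/

open Complex Topology Nat
open scoped Real

local notation "γ" => Real.eulerMascheroniConstant

section Taylor

variable {E : Type*} [NormedAddCommGroup E] [NormedSpace ℂ E] {f : ℂ → E} {c : ℂ}

lemma iteratedDeriv_eq_zero_of_odd_of_symm (hf : ∀ w, f (c - w) = f (c + w)) {n : ℕ}
    (hn : Odd n) : iteratedDeriv n f c = 0 := by
  have hshift : iteratedDeriv n (fun w => f (c + w)) 0 = iteratedDeriv n f c := by
    simp [iteratedDeriv_comp_const_add]
  have hneg := iteratedDeriv_comp_neg n (fun w => f (c + w)) 0
  simp only [← sub_eq_add_neg, hf, neg_zero, hn.neg_one_pow, neg_smul, one_smul, hshift] at hneg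
  have htwice : (2 : ℂ) • iteratedDeriv n f c = 0 := by
    rw [two_smul]
    nth_rw 1 [hneg]
    exact neg_add_cancel _
  exact (smul_eq_zero.mp htwice).resolve_left two_ne_zero

lemma hasSum_smul_iteratedDeriv_of_entire [CompleteSpace E] (hf : Differentiable ℂ f) (c z : ℂ) :
    HasSum (fun k : ℕ => ((k ! : ℂ)⁻¹ * k * (z - c) ^ k) • iteratedDeriv k f c)
      ((z - c) • deriv f z) := by
  -- the Taylor series of `deriv f`, multiplied by `z - c` and shifted by one index
  have htaylor := (hasSum_taylorSeries_of_entire hf.deriv c z).const_smul (z - c)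
  rw [← hasSum_nat_add_iff' 1]
  simp only [Finset.range_one, Finset.sum_singleton, CharP.cast_eq_zero, mul_zero, zero_mul,
    zero_smul, sub_zero]
  convert htaylor using 2 with k
  rw [iteratedDeriv_succ', smul_smul, smul_smul, factorial_succ]
  congr 1
  push_cast
  field_simp
  ring

lemma hasSum_even_smul_iteratedDeriv_of_symm [CompleteSpace E] (hf : Differentiable ℂ f)
    (hsymm : ∀ w, f (c - w) = f (c + w)) (z : ℂ) :
    HasSum (fun n : ℕ => (((2 * n) ! : ℂ)⁻¹ * (2 * n : ℕ) * (z - c) ^ (2 * n)) •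
      iteratedDeriv (2 * n) f c) ((z - c) • deriv f z) := by
  have hvanish : ∀ k ∉ Set.range (2 * ·),
      ((k ! : ℂ)⁻¹ * k * (z - c) ^ k) • iteratedDeriv k f c = 0 := by
    rintro k hk
    have hodd : Odd k := by
      rw [← Nat.not_even_iff_odd]
      rintro ⟨m, rfl⟩
      exact hk ⟨m, two_mul m⟩
    rw [iteratedDeriv_eq_zero_of_odd_of_symm hsymm hodd, smul_zero]
  exact ((mul_right_injective₀ two_ne_zero).hasSum_iff hvanish).mpr
    (hasSum_smul_iteratedDeriv_of_entire hf c z)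

end Taylor

/-- Agrees with `riemannXi` except at `s = 0, 1`, where `completedRiemannZeta` has poles and
hence junk values. -/
noncomputable def xiEntire (s : ℂ) : ℂ := 1 / 2 * s * (s - 1) * completedRiemannZeta₀ s + 1 / 2

lemma differentiable_xiEntire : Differentiable ℂ xiEntire := by
  have := differentiable_completedZeta₀
  unfold xiEntire
  fun_prop

lemma riemannXi_eq_xiEntire {s : ℂ} (h0 : s ≠ 0) (h1 : s ≠ 1) : riemannXi s = xiEntire s := by
  have h1' : 1 - s ≠ 0 := sub_ne_zero.mpr h1.symm
  rw [riemannXi, xiEntire, completedRiemannZeta_eq]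
  field_simp
  ring

lemma riemannXi_eventuallyEq_xiEntire : riemannXi =ᶠ[𝓝 (1 / 2)] xiEntire := by
  filter_upwards [eventually_ne_nhds (by norm_num : (1 / 2 : ℂ) ≠ 0),
    eventually_ne_nhds (by norm_num : (1 / 2 : ℂ) ≠ 1)] with s h0 h1
  exact riemannXi_eq_xiEntire h0 h1

lemma xiEntire_one_sub (s : ℂ) : xiEntire (1 - s) = xiEntire s := by
  rw [xiEntire, xiEntire, completedRiemannZeta₀_one_sub]
  ring

lemma xiEntire_half_sub (w : ℂ) : xiEntire (1 / 2 - w) = xiEntire (1 / 2 + w) := by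
  rw [← xiEntire_one_sub]
  ring_nf

lemma deriv_xiEntire_one :
    deriv xiEntire 1 = ((γ - Real.log (4 * π)) / 4 + 1 / 2 : ℝ) := by
  have hpoly : HasDerivAt (fun s : ℂ => 1 / 2 * s * (s - 1)) (1 / 2) 1 :=
    (((hasDerivAt_id' 1).const_mul (1 / 2 : ℂ)).mul ((hasDerivAt_id' 1).sub_const 1)).congr_deriv
      (by norm_num)
  have hxi : HasDerivAt xiEntire (1 / 2 * completedRiemannZeta₀ 1) 1 :=
    ((hpoly.mul (differentiable_completedZeta₀ 1).hasDerivAt).add_const (1 / 2 : ℂ)).congr_deriv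
      (by ring)
  have hlog : Complex.log (4 * π) = Real.log (4 * π) := by
    rw [ofReal_log (by positivity)]
    push_cast
    rfl
  rw [hxi.deriv, completedRiemannZeta₀_one, hlog]
  push_cast
  ring

lemma hasSum_mul_a_div_four_pow :
    HasSum (fun n : ℕ => (n : ℝ) * a n / 4 ^ n)
      ((γ - Real.log (4 * π)) / 16 + 1 / 8) := by
  have hseries := (hasSum_re <| hasSum_even_smul_iteratedDeriv_of_symm differentiable_xiEntire
    xiEntire_half_sub 1).div_const 2
  have hvalue : ((1 - 1 / 2 : ℂ) • deriv xiEntire 1).re / 2 =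
      (γ - Real.log (4 * π)) / 16 + 1 / 8 := by
    rw [deriv_xiEntire_one, smul_eq_mul, show (1 : ℂ) - 1 / 2 = (1 / 2 : ℝ) by norm_num,
      ← ofReal_mul, ofReal_re]
    ring
  rw [hvalue] at hseries
  refine hseries.congr_fun fun n => ?_
  have hcoeff : (((2 * n) ! : ℂ)⁻¹ * (2 * n : ℕ) * (1 - 1 / 2) ^ (2 * n)) =
      ((((2 * n) ! : ℝ)⁻¹ * (2 * n : ℕ) * (4 ^ n)⁻¹ : ℝ) : ℂ) := by
    have hpow : ((1 : ℂ) - 1 / 2) ^ (2 * n) = ((4 : ℂ) ^ n)⁻¹ := by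
      rw [pow_mul, ← inv_pow]
      norm_num
    rw [hpow]
    push_cast
    rfl
  rw [smul_eq_mul, hcoeff, re_ofReal_mul, a, riemannXi_eventuallyEq_xiEntire.iteratedDeriv_eq]
  push_cast
  ring

theorem eulerMascheroni_eq_log_four_pi_sub_two_add_sum :
    Real.eulerMascheroniConstant =
      Real.log (4 * Real.pi) - 2 + 16 * ∑' n : ℕ, (n : ℝ) * a n / 4 ^ n := by
  rw [hasSum_mul_a_div_four_pow.tsum_eq]
  ring
end

section
/- For every complex s with s ≠ 1 and Γ(1 + s/2) ≠ 0, the Riemann zeta function is given by ζ(s) = (π^{s/2}/((s−1)·Γ(1+s/2))) · Σ_{n=0}^∞ a_{2n}·(s − 1/2)^{2n}, where the series converges for all s ∈ ℂ. -/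
open Complex Filter Topology

/-- The entire completion of `riemannXi`. -/
noncomputable def xi0 (s : ℂ) : ℂ :=
  (1 / 2) * s * (s - 1) * completedRiemannZeta₀ s - (1 / 2) * (s - 1) + (1 / 2) * s

lemma xi0_eq {s : ℂ} (h0 : s ≠ 0) (h1 : s ≠ 1) : riemannXi s = xi0 s := by
  have h1' : (1 : ℂ) - s ≠ 0 := by
    intro h; apply h1; linear_combination -h
  rw [riemannXi, xi0, completedRiemannZeta_eq]
  field_simp
  ring

lemma xi0_differentiable : Differentiable ℂ xi0 := by
  have h1 : Differentiable ℂ fun s : ℂ =>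
      (1 / 2) * s * (s - 1) * completedRiemannZeta₀ s :=
    Differentiable.mul (by fun_prop) differentiable_completedZeta₀
  exact (h1.sub (by fun_prop)).add (by fun_prop)

lemma xi0_symm (s : ℂ) : xi0 (1 - s) = xi0 s := by
  unfold xi0
  rw [completedRiemannZeta₀_one_sub]
  ring

/-- Conjugation-reflection of a holomorphic function is holomorphic. -/
lemma hasDerivAt_conj_conj {f : ℂ → ℂ} {f' : ℂ} {z : ℂ}
    (hf : HasDerivAt f f' ((starRingEnd ℂ) z)) :
    HasDerivAt (fun w => (starRingEnd ℂ) (f ((starRingEnd ℂ) w))) ((starRingEnd ℂ) f') z := by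
  rw [hasDerivAt_iff_tendsto_slope] at hf ⊢
  have h1 : Tendsto (starRingEnd ℂ) (𝓝[≠] z) (𝓝[≠] ((starRingEnd ℂ) z)) := by
    rw [tendsto_nhdsWithin_iff]
    constructor
    · exact (Complex.continuous_conj.tendsto z).mono_left nhdsWithin_le_nhds
    · filter_upwards [self_mem_nhdsWithin] with x hx
      simpa using fun h => hx ((starRingEnd ℂ).injective h)
  have h2 : Tendsto (starRingEnd ℂ) (𝓝 f') (𝓝 ((starRingEnd ℂ) f')) :=
    Complex.continuous_conj.tendsto f'
  refine ((h2.comp hf).comp h1).congr fun x => ?_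
  simp only [Function.comp_apply, slope_def_field]
  rw [← map_sub, ← map_sub, map_div₀, Complex.conj_conj]

lemma iteratedDeriv_conj_conj {f : ℂ → ℂ} (hf : Differentiable ℂ f) (n : ℕ) (z : ℂ) :
    iteratedDeriv n (fun w => (starRingEnd ℂ) (f ((starRingEnd ℂ) w))) z
      = (starRingEnd ℂ) (iteratedDeriv n f ((starRingEnd ℂ) z)) := by
  induction n generalizing f z with
  | zero => simp
  | succ n ih =>
    rw [iteratedDeriv_succ', iteratedDeriv_succ']
    have hd : Differentiable ℂ (deriv f) :=
      analyticOnNhd_univ_iff_differentiable.mp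
        ((analyticOnNhd_univ_iff_differentiable.mpr hf).deriv)
    have hde : (deriv fun w => (starRingEnd ℂ) (f ((starRingEnd ℂ) w)))
        = fun w => (starRingEnd ℂ) (deriv f ((starRingEnd ℂ) w)) := by
      funext w
      exact (hasDerivAt_conj_conj ((hf _).hasDerivAt)).deriv
    rw [hde]
    exact ih hd z

lemma completedRiemannZeta₀_conj (s : ℂ) :
    completedRiemannZeta₀ ((starRingEnd ℂ) s) = (starRingEnd ℂ) (completedRiemannZeta₀ s) := by
  have hg : Differentiable ℂ
      (fun w => (starRingEnd ℂ) (completedRiemannZeta₀ ((starRingEnd ℂ) w))) := fun z =>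
    (hasDerivAt_conj_conj ((differentiable_completedZeta₀ _).hasDerivAt)).differentiableAt
  have key : (fun w => (starRingEnd ℂ) (completedRiemannZeta₀ ((starRingEnd ℂ) w)))
      = completedRiemannZeta₀ := by
    apply AnalyticOnNhd.eq_of_frequently_eq (z₀ := (2 : ℂ))
      (analyticOnNhd_univ_iff_differentiable.mpr hg)
      (analyticOnNhd_univ_iff_differentiable.mpr differentiable_completedZeta₀)
    have htends : Tendsto (fun x : ℝ => (x : ℂ)) (𝓝[≠] (2 : ℝ)) (𝓝[≠] (2 : ℂ)) := by
      rw [tendsto_nhdsWithin_iff]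
      constructor
      · exact (Complex.continuous_ofReal.tendsto 2).mono_left nhdsWithin_le_nhds
      · filter_upwards [self_mem_nhdsWithin] with x hx
        simp only [Set.mem_compl_iff, Set.mem_singleton_iff]
        intro h
        exact hx (by exact_mod_cast h)
    apply htends.frequently
    have hev : ∀ᶠ x : ℝ in 𝓝[≠] (2 : ℝ), 1 < x := by
      filter_upwards [eventually_nhdsWithin_of_eventually_nhds
        (eventually_gt_nhds (by norm_num : (1:ℝ) < 2))] with x hx using hx
    refine hev.frequently.mono fun x hx => ?_
    have hre : (1 : ℝ) < ((x : ℂ)).re := by simpa using hx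
    have hΛ : (starRingEnd ℂ) (completedRiemannZeta (x : ℂ)) = completedRiemannZeta (x : ℂ) := by
      rw [completedZeta_eq_tsum_of_one_lt_re hre]
      have hterm : ∀ n : ℕ, (1 : ℂ) / (n : ℂ) ^ (x : ℂ) = ((1 / (n : ℝ) ^ x : ℝ) : ℂ) := by
        intro n
        rw [Complex.ofReal_div, Complex.ofReal_one, Complex.ofReal_cpow (Nat.cast_nonneg n)]
        norm_num
      rw [show ((x : ℂ) / 2) = (((x / 2 : ℝ)) : ℂ) by push_cast; ring,
        show (-(x : ℂ) / 2) = (((-x / 2 : ℝ)) : ℂ) by push_cast; ring,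
        ← Complex.ofReal_cpow Real.pi_pos.le]
      simp only [hterm, ← Complex.ofReal_tsum]
      rw [map_mul, map_mul, ← Complex.Gamma_conj, Complex.conj_ofReal, Complex.conj_ofReal,
        Complex.conj_ofReal]
    have heq : completedRiemannZeta₀ (x : ℂ)
        = completedRiemannZeta (x : ℂ) + 1 / (x : ℂ) + 1 / (1 - (x : ℂ)) := by
      rw [completedRiemannZeta_eq]; ring
    rw [Complex.conj_ofReal, heq, map_add, map_add, hΛ, map_div₀, map_div₀, map_one, map_sub,
      map_one, Complex.conj_ofReal]
  rw [← congrFun key s, Complex.conj_conj]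

lemma xi0_conj (s : ℂ) : xi0 ((starRingEnd ℂ) s) = (starRingEnd ℂ) (xi0 s) := by
  unfold xi0
  rw [completedRiemannZeta₀_conj]
  simp only [map_add, map_sub, map_mul, map_one, map_div₀, map_ofNat]

lemma iteratedDeriv_xi0_conj_fixed (n : ℕ) :
    (starRingEnd ℂ) (iteratedDeriv n xi0 (1 / 2)) = iteratedDeriv n xi0 (1 / 2) := by
  have hfun : (fun w => (starRingEnd ℂ) (xi0 ((starRingEnd ℂ) w))) = xi0 := by
    funext w
    rw [xi0_conj, Complex.conj_conj]
  have h2 : ((starRingEnd ℂ) (1 / 2 : ℂ)) = (1 / 2 : ℂ) := by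
    rw [map_div₀, map_one, map_ofNat]
  calc (starRingEnd ℂ) (iteratedDeriv n xi0 (1 / 2))
      = (starRingEnd ℂ) (iteratedDeriv n xi0 ((starRingEnd ℂ) (1 / 2))) := by rw [h2]
    _ = iteratedDeriv n (fun w => (starRingEnd ℂ) (xi0 ((starRingEnd ℂ) w))) (1 / 2) :=
        (iteratedDeriv_conj_conj xi0_differentiable n _).symm
    _ = iteratedDeriv n xi0 (1 / 2) := by rw [hfun]

lemma iteratedDeriv_xi0_real (n : ℕ) :
    ((iteratedDeriv n xi0 (1 / 2)).re : ℂ) = iteratedDeriv n xi0 (1 / 2) :=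
  Complex.conj_eq_iff_re.mp (iteratedDeriv_xi0_conj_fixed n)

lemma iteratedDeriv_xi0_odd (n : ℕ) (hn : Odd n) :
    iteratedDeriv n xi0 (1 / 2) = 0 := by
  set F : ℂ → ℂ := fun z => xi0 (1 / 2 + z) with hF
  have hFeven : (fun z => F (-z)) = F := by
    funext z
    show xi0 (1 / 2 + -z) = xi0 (1 / 2 + z)
    rw [show (1 / 2 : ℂ) + -z = 1 - (1 / 2 + z) by ring, xi0_symm]
  have h := iteratedDeriv_comp_neg n F 0
  rw [hFeven, neg_zero, hn.neg_one_pow, neg_smul, one_smul] at h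
  have hF0 : iteratedDeriv n F 0 = iteratedDeriv n xi0 (1 / 2) := by
    rw [hF, iteratedDeriv_comp_const_add]
    norm_num
  rw [hF0] at h
  linear_combination h / 2

lemma a_eq (n : ℕ) :
    (a n : ℂ) = (((2 * n).factorial : ℂ))⁻¹ * iteratedDeriv (2 * n) xi0 (1 / 2) := by
  have hxi : iteratedDeriv (2 * n) riemannXi (1 / 2) = iteratedDeriv (2 * n) xi0 (1 / 2) := by
    apply Filter.EventuallyEq.iteratedDeriv_eq
    have hmem : ({0}ᶜ ∩ {1}ᶜ : Set ℂ) ∈ 𝓝 (1 / 2 : ℂ) := by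
      apply IsOpen.mem_nhds (isOpen_compl_singleton.inter isOpen_compl_singleton)
      constructor <;> · simp only [Set.mem_compl_iff, Set.mem_singleton_iff]; norm_num
    filter_upwards [hmem] with t ht
    exact xi0_eq ht.1 ht.2
  unfold a
  rw [hxi]
  push_cast
  rw [iteratedDeriv_xi0_real]
  ring

lemma hasSum_xi0 (z : ℂ) :
    HasSum (fun n : ℕ => (a n : ℂ) * (z - 1 / 2) ^ (2 * n)) (xi0 z) := by
  have h := Complex.hasSum_taylorSeries_of_entire xi0_differentiable (1 / 2) z
  set f : ℕ → ℂ := fun k => ((k.factorial : ℂ))⁻¹ • (z - 1 / 2) ^ k • iteratedDeriv k xi0 (1 / 2)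
    with hf
  have hzero : ∀ k ∉ Set.range (fun n : ℕ => 2 * n), f k = 0 := by
    intro k hk
    have hodd : Odd k := by
      rcases Nat.even_or_odd k with he | ho
      · obtain ⟨m, hm⟩ := he
        exact absurd ⟨m, show 2 * m = k by omega⟩ hk
      · exact ho
    show ((k.factorial : ℂ))⁻¹ • (z - 1 / 2) ^ k • iteratedDeriv k xi0 (1 / 2) = 0
    rw [iteratedDeriv_xi0_odd k hodd, smul_zero, smul_zero]
  have hinj : Function.Injective (fun n : ℕ => 2 * n) := fun p q h => by
    simpa using h
  have h2 := (Function.Injective.hasSum_iff hinj hzero).mpr h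
  have hfun : (fun n : ℕ => (a n : ℂ) * (z - 1 / 2) ^ (2 * n))
      = (f ∘ fun n : ℕ => 2 * n) := by
    funext n
    simp only [Function.comp_apply, hf, smul_eq_mul, a_eq n]
    ring
  rw [hfun]
  exact h2

theorem zeta_eq_series (s : ℂ) (hs : s ≠ 1) (hΓ : Complex.Gamma (1 + s / 2) ≠ 0) :
    (∀ z : ℂ, Summable fun n : ℕ => (a n : ℂ) * (z - 1 / 2) ^ (2 * n)) ∧
    riemannZeta s =
      ((Real.pi : ℂ) ^ (s / 2) / ((s - 1) * Complex.Gamma (1 + s / 2))) *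
        ∑' n : ℕ, (a n : ℂ) * (s - 1 / 2) ^ (2 * n) := by
  refine ⟨fun z => (hasSum_xi0 z).summable, ?_⟩
  rw [(hasSum_xi0 s).tsum_eq]
  rcases eq_or_ne s 0 with rfl | hs0
  · have hx : xi0 0 = 1 / 2 := by
      unfold xi0; ring_nf
    rw [hx, riemannZeta_zero]
    norm_num [Complex.Gamma_one]
  · have hs2 : s / 2 ≠ 0 := div_ne_zero hs0 two_ne_zero
    have hG : Complex.Gamma (1 + s / 2) = (s / 2) * Complex.Gamma (s / 2) := by
      rw [add_comm, Complex.Gamma_add_one _ hs2]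
    have hGs : Complex.Gamma (s / 2) ≠ 0 := by
      intro h; exact hΓ (by rw [hG, h, mul_zero])
    have hs1 : s - 1 ≠ 0 := sub_ne_zero.mpr hs
    have hpi : (Real.pi : ℂ) ^ (s / 2) ≠ 0 := by
      intro h
      rw [Complex.cpow_eq_zero_iff] at h
      exact Complex.ofReal_ne_zero.mpr Real.pi_ne_zero h.1
    rw [← xi0_eq hs0 hs, riemannZeta_def_of_ne_zero hs0, Gammaℝ_def, riemannXi, hG,
      neg_div, Complex.cpow_neg]
    field_simp
end

section
/- For every integer r ≥ 1, the Bernoulli number B_{2r} satisfies B_{2r} = ((−1)^{r−1}·(2r)!·2^{1−2r}/(π^r·(2r−1)·r!)) · Σ_{n=0}^∞ a_{2n}·(2r − 1/2)^{2n}. -/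
open Complex Real
open scoped Nat

/-- `riemannXi` is not entire as a Lean function: at the poles `0, 1` of `completedRiemannZeta` it
takes the junk value `0` instead of `ξ(0) = ξ(1) = 1/2`. -/
noncomputable def entireRiemannXi (s : ℂ) : ℂ :=
  (1 / 2) * s * (s - 1) * completedRiemannZeta₀ s + 1 / 2

lemma differentiable_entireRiemannXi : Differentiable ℂ entireRiemannXi := by
  unfold entireRiemannXi
  have := differentiable_completedZeta₀
  fun_prop

lemma riemannXi_eq_entireRiemannXi {s : ℂ} (h0 : s ≠ 0) (h1 : s ≠ 1) :
    riemannXi s = entireRiemannXi s := by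
  have h1' : 1 - s ≠ 0 := sub_ne_zero.mpr h1.symm
  rw [riemannXi, entireRiemannXi, completedRiemannZeta_eq]
  field_simp
  ring

lemma entireRiemannXi_one_sub (s : ℂ) : entireRiemannXi (1 - s) = entireRiemannXi s := by
  rw [entireRiemannXi, entireRiemannXi, completedRiemannZeta₀_one_sub]
  ring

lemma iteratedDeriv_riemannXi_one_half (n : ℕ) :
    iteratedDeriv n riemannXi (1 / 2) = iteratedDeriv n entireRiemannXi (1 / 2) := by
  refine Filter.EventuallyEq.iteratedDeriv_eq n ?_
  filter_upwards [eventually_ne_nhds (by norm_num : (1 / 2 : ℂ) ≠ 0),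
    eventually_ne_nhds (by norm_num : (1 / 2 : ℂ) ≠ 1)] with s h0 h1
  exact riemannXi_eq_entireRiemannXi h0 h1

lemma iteratedDeriv_eq_zero_of_odd_of_symmetric {𝕜 F : Type*} [NontriviallyNormedField 𝕜]
    [CharZero 𝕜] [NormedAddCommGroup F] [NormedSpace 𝕜 F] {f : 𝕜 → F} {c : 𝕜}
    (hf : ∀ z, f (c - z) = f (c + z)) {n : ℕ} (hn : Odd n) : iteratedDeriv n f c = 0 := by
  have heven : (fun z ↦ f (c + -z)) = fun z ↦ f (c + z) := funext fun z ↦ by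
    rw [← sub_eq_add_neg, hf]
  have h := iteratedDeriv_comp_neg n (fun z ↦ f (c + z)) 0
  simp only [heven, iteratedDeriv_comp_const_add, neg_zero, add_zero, hn.neg_one_pow,
    neg_one_smul] at h
  have h2 : (2 : 𝕜) • iteratedDeriv n f c = 0 := by
    rw [two_smul]
    nth_rewrite 2 [h]
    exact add_neg_cancel _
  exact (smul_eq_zero.mp h2).resolve_left two_ne_zero

lemma hasSum_even_taylorSeries_of_entire {E : Type*} [NormedAddCommGroup E] [NormedSpace ℂ E]
    [CompleteSpace E] {f : ℂ → E} (hf : Differentiable ℂ f) {c : ℂ}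
    (hodd : ∀ n, Odd n → iteratedDeriv n f c = 0) (z : ℂ) :
    HasSum (fun n : ℕ ↦ ((2 * n)! : ℂ)⁻¹ • (z - c) ^ (2 * n) • iteratedDeriv (2 * n) f c)
      (f z) := by
  have hinj : Function.Injective (2 * · : ℕ → ℕ) := mul_right_injective₀ two_ne_zero
  refine (hinj.hasSum_iff fun k hk ↦ ?_).mpr (hasSum_taylorSeries_of_entire hf c z)
  have hk : Odd k := Nat.not_even_iff_odd.mp fun ⟨j, hj⟩ ↦ hk ⟨j, show 2 * j = k by omega⟩
  rw [hodd k hk, smul_zero, smul_zero]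

lemma hasSum_a_mul_pow (x : ℝ) :
    HasSum (fun n ↦ a n * x ^ (2 * n)) (entireRiemannXi (1 / 2 + x)).re := by
  have hsymm (z : ℂ) : entireRiemannXi (1 / 2 - z) = entireRiemannXi (1 / 2 + z) := by
    rw [← entireRiemannXi_one_sub]
    ring_nf
  have h := hasSum_re <| hasSum_even_taylorSeries_of_entire differentiable_entireRiemannXi
    (fun n hn ↦ iteratedDeriv_eq_zero_of_odd_of_symmetric hsymm hn) (1 / 2 + x)
  convert h using 1
  funext n
  rw [a, iteratedDeriv_riemannXi_one_half, add_sub_cancel_left, smul_eq_mul, smul_eq_mul,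
    ← ofReal_pow, ← ofReal_natCast, ← ofReal_inv, ← mul_assoc, ← ofReal_mul, re_ofReal_mul]
  ring

lemma Gammaℝ_two_mul_nat {r : ℕ} (hr : r ≠ 0) : Gammaℝ (2 * r) = ((r - 1)! / π ^ r : ℝ) := by
  obtain ⟨k, rfl⟩ := Nat.exists_eq_add_one_of_ne_zero hr
  rw [Gammaℝ_def, show -(2 * ((k + 1 : ℕ) : ℂ)) / 2 = -((k + 1 : ℕ) : ℂ) by ring,
    show 2 * ((k + 1 : ℕ) : ℂ) / 2 = k + 1 by push_cast; ring, Complex.Gamma_nat_eq_factorial,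
    cpow_neg, cpow_natCast]
  push_cast
  ring

lemma riemannXi_two_mul_nat {r : ℕ} (hr : r ≠ 0) :
    riemannXi (2 * r) = ((-1) ^ (r + 1) * 2 ^ (2 * r - 1) * π ^ r * (2 * r - 1) * r ! /
      (2 * r)! * bernoulli (2 * r) : ℝ) := by
  have h0 : (2 * r : ℂ) ≠ 0 := by simpa using hr
  have hΛ : completedRiemannZeta (2 * r) = Gammaℝ (2 * r) * riemannZeta (2 * r) := by
    have hre : 0 < (2 * r : ℂ).re := by simpa using Nat.pos_of_ne_zero hr
    rw [riemannZeta_def_of_ne_zero h0, mul_div_cancel₀ _ (Gammaℝ_ne_zero_of_re_pos hre)]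
  obtain ⟨k, rfl⟩ := Nat.exists_eq_add_one_of_ne_zero hr
  rw [riemannXi, hΛ, Gammaℝ_two_mul_nat hr, riemannZeta_two_mul_nat hr, Nat.factorial_succ]
  push_cast
  field_simp
  ring

theorem bernoulli_eq_sum_a (r : ℕ) (hr : 1 ≤ r) :
    ((bernoulli (2 * r) : ℚ) : ℝ) =
      ((-1) ^ (r - 1) * ((2 * r).factorial : ℝ) * (2 : ℝ) ^ (1 - 2 * (r : ℤ)) /
          (Real.pi ^ r * (2 * (r : ℝ) - 1) * (r.factorial : ℝ))) *
        ∑' n : ℕ, a n * (2 * (r : ℝ) - 1 / 2) ^ (2 * n) := by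
  have hr0 : r ≠ 0 := by omega
  have hsum : ∑' n : ℕ, a n * (2 * (r : ℝ) - 1 / 2) ^ (2 * n) = (riemannXi (2 * r)).re := by
    rw [(hasSum_a_mul_pow _).tsum_eq, riemannXi_eq_entireRiemannXi (by simpa using hr0)
      (by norm_cast; omega)]
    push_cast
    ring_nf
  have hsign : (-1 : ℝ) ^ (r - 1) * (-1) ^ (r + 1) = 1 := by
    rw [← pow_add, show r - 1 + (r + 1) = 2 * r by omega, pow_mul]
    norm_num
  have hpow : (2 : ℝ) ^ (1 - 2 * (r : ℤ)) * 2 ^ (2 * r - 1) = 1 := by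
    rw [← zpow_natCast, ← zpow_add₀ two_ne_zero, Nat.cast_sub (by omega)]
    push_cast
    ring_nf
    norm_num
  have hr1 : (2 * r - 1 : ℝ) ≠ 0 := by
    have : (1 : ℝ) ≤ r := by exact_mod_cast hr
    linarith
  rw [hsum, riemannXi_two_mul_nat hr0, ofReal_re]
  field_simp
  linear_combination (-(bernoulli (2 * r) : ℝ) * (-1) ^ (r - 1) * (-1) ^ (r + 1)) * hpow -
    (bernoulli (2 * r) : ℝ) * hsign
end

section
/- The Euler–Mascheroni constant satisfies γ = log(4π) − 2 + 2^3 · Σ_{n=1}^∞ n·(−1)^n·c_n/(2^{2n}·n!), i.e. γ = log(4π) − 2 + 8·Σ_{n=1}^∞ n·(−1)^n·c_n/(4^n·n!). -/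
/-- The `n`-th coefficient of the Jensen expansion:
`c n = (n!/(2n)!) · (d^{2n}/dx^{2n})[2·ξ(1/2 + i·x)]` at `x = 0`. -/
noncomputable def c (n : ℕ) : ℂ :=
  ((n.factorial : ℂ) / (2 * n).factorial) *
    iteratedDeriv (2 * n) (fun x : ℝ => 2 * riemannXi (1 / 2 + Complex.I * x)) 0

/-!
Let `Ξ(z) = ξ(1/2 + iz)`, an even entire function. The `n`-th term of the Jensen sum is half the
`2n`-th term of `∑ₖ k (2Ξ)⁽ᵏ⁾(0) wᵏ / k!` at `w = i/2`, and the odd terms of that series vanish;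
the series is the Taylor expansion of `w (2Ξ)'(w)`. Since `w = i/2` corresponds to `s = 0`, the
Jensen sum is `-ξ'(0)/2 = Λ₀(0)/4`, where `ξ(s) = (s(s-1)Λ₀(s) + 1)/2`. Finally
`Λ₀(0) = Λ₀(1) = (γ - log 4π)/2 + 1` by the functional equation and the pole of `ζ` at `1`.
-/

open Complex Nat

section EntireFunction

variable {f : ℂ → ℂ}

theorem Differentiable.iteratedDeriv_comp_ofReal (hf : Differentiable ℂ f) (n : ℕ) (x : ℝ) :
    iteratedDeriv n (fun t : ℝ => f t) x = iteratedDeriv n f x := by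
  induction n generalizing x with
  | zero => simp
  | succ n ih =>
    rw [iteratedDeriv_succ, iteratedDeriv_succ, funext ih]
    exact ((hf.contDiff.differentiable_iteratedDeriv n (WithTop.coe_lt_top _) x).hasDerivAt
      |>.comp_ofReal).deriv

theorem hasSum_mul_iteratedDeriv_mul_pow_of_entire (hf : Differentiable ℂ f) (w : ℂ) :
    HasSum (fun k : ℕ => k * iteratedDeriv k f 0 * w ^ k / k !) (w * deriv f w) := by
  have hf' : Differentiable ℂ (deriv f) := by
    simpa only [iteratedDeriv_one] using
      hf.contDiff.differentiable_iteratedDeriv 1 (WithTop.coe_lt_top _)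
  refine (hasSum_nat_add_iff' 1).mp ?_
  simp only [Finset.range_one, Finset.sum_singleton, CharP.cast_eq_zero, zero_mul, zero_div,
    sub_zero]
  refine ((hasSum_taylorSeries_of_entire hf' 0 w).mul_left w).congr_fun fun n => ?_
  rw [iteratedDeriv_succ', factorial_succ]
  simp only [smul_eq_mul, sub_zero]
  push_cast
  field_simp
  ring

theorem Function.Even.iteratedDeriv_zero_eq_zero {𝕜 : Type*} [NontriviallyNormedField 𝕜]
    [CharZero 𝕜] {g : 𝕜 → 𝕜} (hg : g.Even) {k : ℕ} (hk : Odd k) : iteratedDeriv k g 0 = 0 := by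
  have h := iteratedDeriv_comp_neg k g 0
  simp only [hg.eq, neg_zero, hk.neg_one_pow, neg_one_smul] at h
  exact CharZero.eq_neg_self_iff.mp h

theorem hasSum_even_mul_iteratedDeriv_mul_pow_of_entire (hf : Differentiable ℂ f)
    (heven : f.Even) (w : ℂ) :
    HasSum (fun n : ℕ => (2 * n : ℕ) * iteratedDeriv (2 * n) f 0 * w ^ (2 * n) / (2 * n)!)
      (w * deriv f w) := by
  have hodd : ∀ k ∉ Set.range (2 * ·), k * iteratedDeriv k f 0 * w ^ k / k ! = 0 := by
    intro k hk
    obtain ⟨r, rfl | rfl⟩ := Nat.even_or_odd' k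
    · exact absurd ⟨r, rfl⟩ hk
    · simp [heven.iteratedDeriv_zero_eq_zero (odd_two_mul_add_one r)]
  exact ((mul_right_injective₀ two_ne_zero).hasSum_iff hodd).mpr
    (hasSum_mul_iteratedDeriv_mul_pow_of_entire hf w)

end EntireFunction

/-- `ξ` as an entire function: `riemannXi` inherits junk values at `s = 0, 1` from
`completedRiemannZeta`, e.g. `riemannXi 0 = 0` whereas `ξ(0) = 1/2`. -/
noncomputable def riemannXiEntire (s : ℂ) : ℂ := (s * (s - 1) * completedRiemannZeta₀ s + 1) / 2

theorem differentiable_riemannXiEntire : Differentiable ℂ riemannXiEntire := by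
  have := differentiable_completedZeta₀
  unfold riemannXiEntire
  fun_prop

theorem riemannXiEntire_one_sub (s : ℂ) : riemannXiEntire (1 - s) = riemannXiEntire s := by
  rw [riemannXiEntire, riemannXiEntire, completedRiemannZeta₀_one_sub]
  ring

theorem riemannXi_eq_riemannXiEntire {s : ℂ} (hs₀ : s ≠ 0) (hs₁ : s ≠ 1) :
    riemannXi s = riemannXiEntire s := by
  have hs₁' : 1 - s ≠ 0 := sub_ne_zero.mpr hs₁.symm
  rw [riemannXi, riemannXiEntire, completedRiemannZeta_eq]
  field_simp
  ring

theorem hasDerivAt_riemannXiEntire_zero :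
    HasDerivAt riemannXiEntire (-completedRiemannZeta₀ 0 / 2) 0 := by
  have h := (((hasDerivAt_id' (0 : ℂ)).mul ((hasDerivAt_id' 0).sub_const 1)).mul
    (differentiable_completedZeta₀ 0).hasDerivAt).add_const 1 |>.div_const 2
  exact h.congr_deriv (by simp)

noncomputable def riemannCapitalXi (z : ℂ) : ℂ := riemannXiEntire (1 / 2 + I * z)

theorem differentiable_riemannCapitalXi : Differentiable ℂ riemannCapitalXi :=
  differentiable_riemannXiEntire.comp (by fun_prop)

theorem riemannCapitalXi_even : riemannCapitalXi.Even := fun z => by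
  rw [riemannCapitalXi, riemannCapitalXi, ← riemannXiEntire_one_sub]
  ring_nf

theorem riemannXi_half_add_I_mul_ofReal (x : ℝ) :
    riemannXi (1 / 2 + I * x) = riemannCapitalXi x := by
  have hre : (1 / 2 + I * x).re = 1 / 2 := by simp
  rw [riemannCapitalXi]
  refine riemannXi_eq_riemannXiEntire ?_ ?_ <;> intro h <;> rw [h] at hre <;> norm_num at hre

theorem hasDerivAt_riemannCapitalXi_I_div_two :
    HasDerivAt riemannCapitalXi (-I * completedRiemannZeta₀ 0 / 2) (I / 2) := by
  have hline : HasDerivAt (fun z : ℂ => 1 / 2 + I * z) I (I / 2) := by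
    simpa using ((hasDerivAt_id (I / 2)).const_mul I).const_add (1 / 2 : ℂ)
  have hzero : 1 / 2 + I * (I / 2) = 0 := by linear_combination I_sq / 2
  have hxi : HasDerivAt riemannXiEntire (-completedRiemannZeta₀ 0 / 2) (1 / 2 + I * (I / 2)) :=
    hzero ▸ hasDerivAt_riemannXiEntire_zero
  exact (hxi.comp (h := fun z : ℂ => 1 / 2 + I * z) (I / 2) hline).congr_deriv (by ring)

theorem c_eq_iteratedDeriv_riemannCapitalXi (n : ℕ) :
    c n = n ! / (2 * n)! * iteratedDeriv (2 * n) (fun z => 2 * riemannCapitalXi z) 0 := by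
  simp_rw [c, riemannXi_half_add_I_mul_ofReal]
  rw [← ofReal_zero, ← (differentiable_riemannCapitalXi.const_mul 2).iteratedDeriv_comp_ofReal]

theorem hasSum_jensen_sum :
    HasSum (fun n : ℕ => (n : ℂ) * (-1) ^ n * c n / (4 ^ n * n !))
      (completedRiemannZeta₀ 0 / 4) := by
  have h := hasSum_even_mul_iteratedDeriv_mul_pow_of_entire
    (differentiable_riemannCapitalXi.const_mul 2) (riemannCapitalXi_even.left_comp (2 * ·)) (I / 2)
  rw [(hasDerivAt_riemannCapitalXi_I_div_two.const_mul 2).deriv] at h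
  have hvalue :
      completedRiemannZeta₀ 0 / 4 = I / 2 * (2 * (-I * completedRiemannZeta₀ 0 / 2)) / 2 := by
    linear_combination completedRiemannZeta₀ 0 / 4 * I_sq
  rw [hvalue]
  refine (h.div_const 2).congr_fun fun n => ?_
  have hpow : (I / 2) ^ (2 * n) = (-1) ^ n / 4 ^ n := by
    rw [pow_mul, div_pow, I_sq, div_pow]
    norm_num
  have hfac : (n ! : ℂ) ≠ 0 := Nat.cast_ne_zero.mpr n.factorial_ne_zero
  rw [c_eq_iteratedDeriv_riemannCapitalXi, hpow]
  push_cast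
  field_simp

theorem eulerMascheroni_eq_log_four_pi_sub_two_add_jensen_sum :
    (Real.eulerMascheroniConstant : ℂ) =
      (Real.log (4 * Real.pi) : ℂ) - 2 +
        8 * ∑' n : ℕ, (n : ℂ) * (-1) ^ n * c n / (4 ^ n * n.factorial) := by
  rw [hasSum_jensen_sum.tsum_eq, completedRiemannZeta₀_zero,
    ofReal_log (by positivity : (0 : ℝ) ≤ 4 * Real.pi)]
  push_cast
  ring
end
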